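/- For every continuation-stack type κ and every n ≥ ‖κ‖ (the minimal length of κ), any stack of n distinct variables x₁::…::xₙ belongs to ⟦κ⟧, where ‖δ×ω‖ = 1, ‖δ×κ‖ = 1 + ‖κ‖, and ‖κ₁∧κ₂‖ = max(‖κ₁‖,‖κ₂‖). -/

import Mathlib

/-- λμ-terms: variables, abstraction, application, and μ-abstraction
    `mu a b M` represents μα.[β]M (a = α, b = β). -/
inductive Trm : Type
  | var : ℕ → Trm
  | lam : ℕ → Trm → Trm
  | app : Trm → Trm → Trm
  | mu  : ℕ → ℕ → Trm → Trm
deriving DecidableEq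

/-- Term substitution M[N/x] (Barendregt convention: no capture). -/
def subst : Trm → ℕ → Trm → Trm
  | .var y, x, N => if y = x then N else .var y
  | .lam y M, x, N => .lam y (subst M x N)
  | .app M P, x, N => .app (subst M x N) (subst P x N)
  | .mu a b M, x, N => .mu a b (subst M x N)

/-- Structural substitution M{α ⇐ N}: every named subterm [α]P becomes [α]PN. -/
def ssub : Trm → ℕ → Trm → Trm
  | .var y, _, _ => .var y
  | .lam y M, a, N => .lam y (ssub M a N)
  | .app M P, a, N => .app (ssub M a N) (ssub P a N)
  | .mu b c M, a, N =>
      .mu b c (if c = a then .app (ssub M a N) N else ssub M a N)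

/-- Iterated structural substitution M{α ⇐ N₁}…{α ⇐ Nₘ}. -/
def ssubs (a : ℕ) (M : Trm) (Ns : List Trm) : Trm :=
  Ns.foldl (fun T N => ssub T a N) M

/-- Application of a term to a stack of terms: M L₁ … Lₖ. -/
def appList (M : Trm) (L : List Trm) : Trm := L.foldl .app M

/-- One-step reduction: logical (β) and structural (μ) rules, compatible closure. -/
inductive Red : Trm → Trm → Prop
  | beta (x : ℕ) (M N : Trm) : Red (.app (.lam x M) N) (subst M x N)
  | mu (a b : ℕ) (M N : Trm) : Red (.app (.mu a b M) N) (ssub (.mu a b M) a N)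
  | appL {M M' : Trm} (N : Trm) : Red M M' → Red (.app M N) (.app M' N)
  | appR (M : Trm) {N N' : Trm} : Red N N' → Red (.app M N) (.app M N')
  | lam (x : ℕ) {M M' : Trm} : Red M M' → Red (.lam x M) (.lam x M')
  | muC (a b : ℕ) {M M' : Trm} : Red M M' → Red (.mu a b M) (.mu a b M')

/-- Strong normalisation: no infinite reduction sequence from M. -/
def SN (M : Trm) : Prop := Acc (fun p q => Red q p) M

/-- Stacks of strongly normalising terms. -/
def SNs (L : List Trm) : Prop := ∀ P ∈ L, SN P

mutual
/-- Term types δ ::= ν | ω→ν | κ→ν | δ∧δ. -/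
inductive TyD : Type
  | nu : TyD
  | arrOmega : TyD
  | arr : TyC → TyD
  | inter : TyD → TyD → TyD
/-- Continuation-stack types κ ::= δ×ω | δ×κ | κ∧κ. -/
inductive TyC : Type
  | prodOmega : TyD → TyC
  | prod : TyD → TyC → TyC
  | inter : TyC → TyC → TyC
end

mutual
/-- The subtyping preorder on term types. -/
inductive LeD : TyD → TyD → Prop
  | refl (d) : LeD d d
  | trans {d1 d2 d3} : LeD d1 d2 → LeD d2 d3 → LeD d1 d3
  | interL (d1 d2) : LeD (.inter d1 d2) d1
  | interR (d1 d2) : LeD (.inter d1 d2) d2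
  | glb {d d1 d2} : LeD d d1 → LeD d d2 → LeD d (.inter d1 d2)
  | nuOmega : LeD .nu .arrOmega
  | omegaNu : LeD .arrOmega .nu
  | arr {k1 k2} : LeC k2 k1 → LeD (.arr k1) (.arr k2)
/-- The subtyping preorder on continuation-stack types. -/
inductive LeC : TyC → TyC → Prop
  | refl (k) : LeC k k
  | trans {k1 k2 k3} : LeC k1 k2 → LeC k2 k3 → LeC k1 k3
  | interL (k1 k2) : LeC (.inter k1 k2) k1
  | interR (k1 k2) : LeC (.inter k1 k2) k2
  | glb {k k1 k2} : LeC k k1 → LeC k k2 → LeC k (.inter k1 k2)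
  | drop (d1 d2) : LeC (.prod d1 (.prodOmega d2)) (.prodOmega d1)
  | distOmega (d1 d2 k) :
      LeC (.inter (.prodOmega d1) (.prod d2 k)) (.prod (.inter d1 d2) k)
  | dist (d1 d2 k1 k2) :
      LeC (.inter (.prod d1 k1) (.prod d2 k2))
          (.prod (.inter d1 d2) (.inter k1 k2))
  | monoOmega {d1 d2} : LeD d1 d2 → LeC (.prodOmega d1) (.prodOmega d2)
  | mono {d1 d2 k1 k2} : LeD d1 d2 → LeC k1 k2 → LeC (.prod d1 k1) (.prod d2 k2)
end

mutual
/-- Interpretation of term types as sets of terms. -/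
def semD : TyD → Set Trm
  | .nu => {M | SN M}
  | .arrOmega => {M | SN M}
  | .arr k => {M | ∀ L ∈ semC k, SN (appList M L)}
  | .inter d1 d2 => semD d1 ∩ semD d2
/-- Interpretation of continuation-stack types as sets of stacks. -/
def semC : TyC → Set (List Trm)
  | .prodOmega d => {l | ∃ N L, l = N :: L ∧ N ∈ semD d ∧ SNs L}
  | .prod d k => {l | ∃ N L, l = N :: L ∧ N ∈ semD d ∧ L ∈ semC k}
  | .inter k1 k2 => semC k1 ∩ semC k2
end

/-- Minimal length ‖κ‖ of stacks in ⟦κ⟧. -/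
def lenC : TyC → ℕ
  | .prodOmega _ => 1
  | .prod _ k => 1 + lenC k
  | .inter k1 k2 => max (lenC k1) (lenC k2)

abbrev Ctx := ℕ → Option TyD
abbrev NCtx := ℕ → Option TyC

/-- The intersection type assignment system for λμ.
    In the (abs)/(app) rules κ may be a continuation type or ω, hence two forms. -/
inductive Typ : Ctx → Trm → TyD → NCtx → Prop
  | ax {Γ : Ctx} {x δ} (Δ : NCtx) : Γ x = some δ → Typ Γ (.var x) δ Δ
  | abs {Γ x δ κ M Δ} : Typ (Function.update Γ x (some δ)) M (.arr κ) Δ →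
      Typ Γ (.lam x M) (.arr (.prod δ κ)) Δ
  | absOmega {Γ x δ M Δ} : Typ (Function.update Γ x (some δ)) M .arrOmega Δ →
      Typ Γ (.lam x M) (.arr (.prodOmega δ)) Δ
  | app {Γ M N δ κ Δ} : Typ Γ M (.arr (.prod δ κ)) Δ → Typ Γ N δ Δ →
      Typ Γ (.app M N) (.arr κ) Δ
  | appOmega {Γ M N δ Δ} : Typ Γ M (.arr (.prodOmega δ)) Δ → Typ Γ N δ Δ →
      Typ Γ (.app M N) .arrOmega Δ
  | muNe {Γ M a b κ κ' Δ} : a ≠ b →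
      Typ Γ M (.arr κ') (Function.update (Function.update Δ b (some κ')) a (some κ)) →
      Typ Γ (.mu a b M) (.arr κ) (Function.update Δ b (some κ'))
  | muEq {Γ M a κ Δ} : Typ Γ M (.arr κ) (Function.update Δ a (some κ)) →
      Typ Γ (.mu a a M) (.arr κ) Δ
  | sub {Γ M δ δ' Δ} : Typ Γ M δ Δ → LeD δ δ' → Typ Γ M δ' Δ
  | inter {Γ M δ1 δ2 Δ} : Typ Γ M δ1 Δ → Typ Γ M δ2 Δ → Typ Γ M (.inter δ1 δ2) Δ

/-- Free variables. -/
def fv : Trm → Set ℕ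
  | .var x => {x}
  | .lam x M => fv M \ {x}
  | .app M N => fv M ∪ fv N
  | .mu _ _ M => fv M

/-- Free names. -/
def fn : Trm → Set ℕ
  | .var _ => ∅
  | .lam _ M => fn M
  | .app M N => fn M ∪ fn N
  | .mu a b M => (fn M ∪ {b}) \ {a}

/-- Bound variables. -/
def bv : Trm → Set ℕ
  | .var _ => ∅
  | .lam x M => {x} ∪ bv M
  | .app M N => bv M ∪ bv N
  | .mu _ _ M => bv M

/-- Bound names. -/
def bn : Trm → Set ℕ
  | .var _ => ∅
  | .lam _ M => bn M
  | .app M N => bn M ∪ bn N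
  | .mu a _ M => {a} ∪ bn M

/-- Γ' ≤ Γ on variable contexts. -/
def CtxLe (Γ' Γ : Ctx) : Prop :=
  ∀ x δ, Γ x = some δ → ∃ δ', Γ' x = some δ' ∧ LeD δ' δ

/-- Δ' ≤ Δ on name contexts. -/
def NCtxLe (Δ' Δ : NCtx) : Prop :=
  ∀ a κ, Δ a = some κ → ∃ κ', Δ' a = some κ' ∧ LeC κ' κ

/-- Application of a parallel substitution (ξv on variables, ξn on names;
    default ξv x = var x / ξn a = [] encodes "not in the domain"). -/
def psub (ξv : ℕ → Trm) (ξn : ℕ → List Trm) : Trm → Trm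
  | .var x => ξv x
  | .lam x M => .lam x (psub ξv ξn M)
  | .app M N => .app (psub ξv ξn M) (psub ξv ξn N)
  | .mu a b M => .mu a b (appList (psub ξv ξn M) (ξn b))

/-- Normal forms: N ::= x N₁…Nₖ | λx.N | μα.[β]N. -/
inductive Nf : Trm → Prop
  | varApp (x : ℕ) (Ns : List Trm) : (∀ N ∈ Ns, Nf N) → Nf (appList (.var x) Ns)
  | lam (x : ℕ) {M} : Nf M → Nf (.lam x M)
  | mu (a b : ℕ) {M} : Nf M → Nf (.mu a b M)

/-- Simple types (logical formulas) A ::= φ | A → B. -/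
inductive SType : Type
  | base : ℕ → SType
  | arrow : SType → SType → SType

abbrev SCtx := ℕ → Option SType

/-- Parigot's simply-typed λμ-calculus (propositional fragment). -/
inductive STyp : SCtx → Trm → SType → SCtx → Prop
  | ax {Γ : SCtx} {x A} (Δ : SCtx) : Γ x = some A → STyp Γ (.var x) A Δ
  | arrI {Γ x A B M Δ} : STyp (Function.update Γ x (some A)) M B Δ →
      STyp Γ (.lam x M) (.arrow A B) Δ
  | arrE {Γ M N A B Δ} : STyp Γ M (.arrow A B) Δ → STyp Γ N A Δ →
      STyp Γ (.app M N) B Δ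
  | mu1 {Γ M a A Δ} : STyp Γ M A (Function.update Δ a (some A)) →
      STyp Γ (.mu a a M) A Δ
  | mu2 {Γ M a b A B Δ} : a ≠ b →
      STyp Γ M B (Function.update (Function.update Δ b (some B)) a (some A)) →
      STyp Γ (.mu a b M) A (Function.update Δ b (some B))

/-- Translation of formulas to continuation-stack types. -/
def transC : SType → TyC
  | .base _ => .prodOmega .nu
  | .arrow A B => .prod (.arr (transC A)) (transC B)

/-- Translation of formulas to term types. -/
def transD (A : SType) : TyD := .arr (transC A)

/-! A term of the form `x N₁ … Nₖ` with every `Nᵢ` strongly normalising is strongly normalising,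
since it has no head redex. Hence such terms lie in every `⟦δ⟧`, and stacks of at least `‖κ‖` of
them in `⟦κ⟧`. Conversely every `⟦δ⟧` consists of strongly normalising terms, because `⟦κ⟧`
contains stacks of variables, so that `M ∈ ⟦κ → ν⟧` makes `M x₁ … xₙ`, and hence `M`, strongly
normalising. The two facts are proved together by mutual induction on types. -/

inductive IsVarApp : Trm → Prop
  | var (x : ℕ) : IsVarApp (.var x)
  | app {M : Trm} (N : Trm) : IsVarApp M → IsVarApp (.app M N)

lemma sn_var (x : ℕ) : SN (.var x) :=
  ⟨_, fun _ h => nomatch h⟩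

lemma Red.appList {M M' : Trm} (h : Red M M') (L : List Trm) :
    Red (appList M L) (appList M' L) := by
  induction L generalizing M M' with
  | nil => exact h
  | cons N L ih => exact ih (.appL N h)

lemma sn_of_sn_appList {M : Trm} {L : List Trm} (h : SN (appList M L)) : SN M := by
  generalize hT : appList M L = T at h
  induction h generalizing M with
  | intro T _ ih =>
    subst hT
    exact ⟨M, fun M' hM' => ih _ (hM'.appList L) rfl⟩

namespace IsVarApp

lemma not_lam {M : Trm} (h : IsVarApp M) (x : ℕ) (P : Trm) : M ≠ .lam x P := by
  cases h <;> simp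

lemma not_mu {M : Trm} (h : IsVarApp M) (a b : ℕ) (P : Trm) : M ≠ .mu a b P := by
  cases h <;> simp

lemma red {M M' : Trm} (hM : IsVarApp M) (h : Red M M') : IsVarApp M' := by
  induction hM generalizing M' with
  | var x => cases h
  | app N hM ih =>
    cases h with
    | beta x P N => exact absurd rfl (hM.not_lam x P)
    | mu a b P N => exact absurd rfl (hM.not_mu a b P)
    | appL N h => exact .app N (ih h)
    | appR _ _ => exact .app _ hM

/-- Without a head redex, every reduction step of `M N` takes place inside `M` or inside `N`. -/
lemma sn_app {M N : Trm} (hM : IsVarApp M) (hMsn : SN M) (hNsn : SN N) : SN (.app M N) := by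
  induction hMsn generalizing N with
  | intro M _ ihM =>
    induction hNsn with
    | intro N hNacc ihN =>
      refine ⟨_, fun Q hQ => ?_⟩
      cases hQ with
      | beta x P N => exact absurd rfl (hM.not_lam x P)
      | mu a b P N => exact absurd rfl (hM.not_mu a b P)
      | appL N h => exact ihM _ h (hM.red h) ⟨N, hNacc⟩
      | appR M h => exact ihN _ h

lemma sn_appList {M : Trm} {L : List Trm} (hM : IsVarApp M) (hMsn : SN M) (hL : SNs L) :
    SN (appList M L) := by
  induction L generalizing M with
  | nil => exact hMsn
  | cons N L ih =>
    exact ih (.app N hM) (hM.sn_app hMsn (hL N (.head L))) fun P hP => hL P (.tail N hP)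

end IsVarApp

mutual

theorem mem_semD_of_isVarApp (d : TyD) {M : Trm} (hM : IsVarApp M) (hMsn : SN M) :
    M ∈ semD d := by
  cases d with
  | nu => exact hMsn
  | arrOmega => exact hMsn
  | arr k => exact fun L hL => hM.sn_appList hMsn (sns_of_mem_semC k hL)
  | inter d₁ d₂ => exact ⟨mem_semD_of_isVarApp d₁ hM hMsn, mem_semD_of_isVarApp d₂ hM hMsn⟩

theorem sn_of_mem_semD (d : TyD) {M : Trm} (hM : M ∈ semD d) : SN M := by
  cases d with
  | nu => exact hM
  | arrOmega => exact hM
  | arr k =>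
    have hvars : (List.replicate (lenC k) 0).map Trm.var ∈ semC k :=
      mem_semC_of_isVarApp k (by simp [IsVarApp.var, sn_var]) (by simp)
    exact sn_of_sn_appList (hM _ hvars)
  | inter d₁ _ => exact sn_of_mem_semD d₁ hM.1

theorem mem_semC_of_isVarApp (k : TyC) {L : List Trm} (hL : ∀ M ∈ L, IsVarApp M ∧ SN M)
    (hlen : lenC k ≤ L.length) : L ∈ semC k := by
  cases k with
  | prodOmega d =>
    obtain _ | ⟨N, L⟩ := L
    · simp [lenC] at hlen
    · obtain ⟨hN, hNsn⟩ := hL N (.head L)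
      exact ⟨N, L, rfl, mem_semD_of_isVarApp d hN hNsn, fun P hP => (hL P (.tail N hP)).2⟩
  | prod d k =>
    obtain _ | ⟨N, L⟩ := L
    · simp [lenC] at hlen
    · obtain ⟨hN, hNsn⟩ := hL N (.head L)
      refine ⟨N, L, rfl, mem_semD_of_isVarApp d hN hNsn,
        mem_semC_of_isVarApp k (fun P hP => hL P (.tail N hP)) ?_⟩
      simp only [lenC, List.length_cons] at hlen
      omega
  | inter k₁ k₂ =>
    exact ⟨mem_semC_of_isVarApp k₁ hL (le_of_max_le_left hlen),
      mem_semC_of_isVarApp k₂ hL (le_of_max_le_right hlen)⟩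

theorem sns_of_mem_semC (k : TyC) {L : List Trm} (hL : L ∈ semC k) : SNs L := by
  cases k with
  | prodOmega d =>
    obtain ⟨N, L, rfl, hN, hLsn⟩ := hL
    exact List.forall_mem_cons.mpr ⟨sn_of_mem_semD d hN, hLsn⟩
  | prod d k =>
    obtain ⟨N, L, rfl, hN, hL⟩ := hL
    exact List.forall_mem_cons.mpr ⟨sn_of_mem_semD d hN, sns_of_mem_semC k hL⟩
  | inter k₁ _ => exact sns_of_mem_semC k₁ hL.1

end

/-- Any stack of n ≥ ‖κ‖ distinct variables belongs to ⟦κ⟧. -/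
theorem var_stack_in_semC (κ : TyC) (n : ℕ) (hn : lenC κ ≤ n)
    (xs : List ℕ) (hlen : xs.length = n) (hnd : xs.Nodup) :
    (xs.map Trm.var) ∈ semC κ :=
  mem_semC_of_isVarApp κ (by simp [IsVarApp.var, sn_var]) (by simpa [hlen] using hn)
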